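/- arXiv:1007.0259 — 5 statements merged into one kernel-verified Lean document; each statement's English description precedes it below -/
import Mathlib

section
/- For any finite Abelian group G and positive integer j, D_{j+1}(G) ≤ min over positive integers i of max{ D_j(G) + i , s_{≤i}(G) − 1 }. -/
/-!
Given a sequence `S` that is long enough, adjoin `g = -σ(S)` and take a short zero-sum
subsequence `T` of `g :: S`. If `T` avoids `g`, then `S - T` still has `D_j(G)` terms and so
contains `j` disjoint zero-sum subsequences, and `T` is the last one. Otherwise
`T = g :: V` with `σ(V) = σ(S)`, so `Z = S - V` is a zero-sum sequence with more than
`D_j(G)` terms; `j` disjoint zero-sum subsequences of `Z` with one term of `Z` removed leave a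
non-empty zero-sum remainder in `Z`.
-/

def jDavenportSet (G : Type*) [AddCommGroup G] (j : ℕ) : Set ℕ :=
  {ℓ | ∀ S : Multiset G, ℓ ≤ Multiset.card S →
    ∃ L : List (Multiset G), L.length = j ∧ L.sum ≤ S ∧ ∀ T ∈ L, T ≠ 0 ∧ T.sum = 0}

/-- Defining set for `s_{≤ i}(G)` in `ℕ∞`: thresholds `ℓ` such that every sequence of
length at least `ℓ` has a non-empty zero-sum subsequence of length at most `i`. -/
def shortZeroSumSet (G : Type*) [AddCommGroup G] (i : ℕ) : Set ℕ∞ :=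
  {ℓ | ∀ S : Multiset G, ℓ ≤ (Multiset.card S : ℕ∞) →
    ∃ T ≤ S, T ≠ 0 ∧ T.sum = 0 ∧ Multiset.card T ≤ i}

section ZeroSumSubsequences

open Multiset

variable {G : Type*} [AddCommGroup G] {i j D : ℕ} {S T Z : Multiset G}

lemma Multiset.sum_list_sum_eq_zero {L : List (Multiset G)} (hL : ∀ T ∈ L, T.sum = 0) :
    L.sum.sum = 0 := by
  rw [← coe_sumAddMonoidHom, map_list_sum]
  exact List.sum_eq_zero fun x hx => by
    obtain ⟨T, hT, rfl⟩ := List.mem_map.1 hx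
    exact hL T hT

def HasDisjointZeroSums (j : ℕ) (S : Multiset G) : Prop :=
  ∃ L : List (Multiset G), L.length = j ∧ L.sum ≤ S ∧ ∀ T ∈ L, T ≠ 0 ∧ T.sum = 0

namespace HasDisjointZeroSums

lemma mono (h : HasDisjointZeroSums j S) (hST : S ≤ T) : HasDisjointZeroSums j T :=
  let ⟨L, hlen, hle, hL⟩ := h
  ⟨L, hlen, hle.trans hST, hL⟩

lemma add (hT0 : T ≠ 0) (hT : T.sum = 0) (h : HasDisjointZeroSums j S) :
    HasDisjointZeroSums (j + 1) (T + S) := by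
  obtain ⟨L, hlen, hle, hL⟩ := h
  refine ⟨T :: L, by simp [hlen], by simpa using add_le_add_left hle T, ?_⟩
  intro U hU
  rcases List.mem_cons.1 hU with rfl | hU
  exacts [⟨hT0, hT⟩, hL U hU]

lemma succ_of_lt [DecidableEq G] (hZ : Z.sum = 0) (h : HasDisjointZeroSums j S) (hSZ : S < Z) :
    HasDisjointZeroSums (j + 1) Z := by
  obtain ⟨L, hlen, hle, hL⟩ := h
  have hLZ : L.sum ≤ Z := hle.trans hSZ.le
  have hsplit : Z - L.sum + L.sum = Z := tsub_add_cancel_of_le hLZ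
  have hrest0 : Z - L.sum ≠ 0 := by
    rw [Ne, tsub_eq_zero_iff_le]
    exact (hle.trans_lt hSZ).not_ge
  have hrest : (Z - L.sum).sum = 0 := by
    have := congrArg Multiset.sum hsplit
    rwa [sum_add, sum_list_sum_eq_zero fun T hT => (hL T hT).2, hZ, add_zero] at this
  simpa [hsplit] using add hrest0 hrest ⟨L, hlen, le_rfl, hL⟩

end HasDisjointZeroSums

lemma hasDisjointZeroSums_succ_of_le_of_sum_eq_zero [DecidableEq G] (hD : D ∈ jDavenportSet G j)
    (hTS : T ≤ S) (hT0 : T ≠ 0) (hT : T.sum = 0) (hcard : D + card T ≤ card S) :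
    HasDisjointZeroSums (j + 1) S := by
  have hrest : D ≤ card (S - T) := by
    rw [card_sub hTS]
    omega
  simpa [add_tsub_cancel_of_le hTS] using
    HasDisjointZeroSums.add hT0 hT (hD _ hrest)

lemma hasDisjointZeroSums_succ_of_sum_eq_zero [DecidableEq G] (hD : D ∈ jDavenportSet G j)
    (hZ : Z.sum = 0) (hcard : D < card Z) : HasDisjointZeroSums (j + 1) Z := by
  obtain ⟨a, ha⟩ := card_pos_iff_exists_mem.1 (D.zero_le.trans_lt hcard)
  have hrest : D ≤ card (Z.erase a) := by
    rw [card_erase_of_mem ha]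
    exact Nat.le_pred_of_lt hcard
  exact .succ_of_lt hZ (hD _ hrest) (erase_lt.2 ha)

lemma hasDisjointZeroSums_succ [DecidableEq G] (hD : D ∈ jDavenportSet G j) {s : ℕ∞}
    (hs : s ∈ shortZeroSumSet G i) (hcard : D + i ≤ card S) (hsS : s ≤ card S + 1) :
    HasDisjointZeroSums (j + 1) S := by
  set g := -S.sum
  obtain ⟨T, hTS, hT0, hT, hTi⟩ := hs (g ::ₘ S) (by simpa using hsS)
  by_cases hg : g ∈ T
  · set V := T.erase g
    have hVS : V ≤ S := by simpa using erase_le_erase g hTS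
    have hVsum : V.sum = S.sum := by
      rw [← cons_erase hg, sum_cons] at hT
      rw [eq_neg_of_add_eq_zero_right hT, neg_neg]
    have hZ : (S - V).sum = 0 := by
      have := congrArg Multiset.sum (tsub_add_cancel_of_le hVS)
      rwa [sum_add, hVsum, add_eq_right] at this
    have hcardV : card V < card T := by
      rw [card_erase_of_mem hg]
      exact Nat.pred_lt (card_pos.2 hT0).ne'
    refine (hasDisjointZeroSums_succ_of_sum_eq_zero hD hZ ?_).mono tsub_le_self
    rw [card_sub hVS]
    omega
  · exact hasDisjointZeroSums_succ_of_le_of_sum_eq_zero hD ((le_cons_of_notMem hg).1 hTS)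
      hT0 hT (by omega)

end ZeroSumSubsequences

theorem stmt5_general (G : Type*) [AddCommGroup G] (j : ℕ)
    (Dj Dj1 : ℕ) (hDj : IsLeast (jDavenportSet G j) Dj)
    (hDj1 : IsLeast (jDavenportSet G (j + 1)) Dj1)
    (s : ℕ → ℕ∞) (hs : ∀ i, IsLeast (shortZeroSumSet G i) (s i)) :
    ∀ i : ℕ, 0 < i → (Dj1 : ℕ∞) ≤ max ((Dj : ℕ∞) + i) (s i - 1) := by
  classical
  intro i _
  obtain hmax | ⟨ℓ, hℓ⟩ := (eq_or_ne (max ((Dj : ℕ∞) + i) (s i - 1)) ⊤).imp_right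
    ENat.ne_top_iff_exists.1
  · simp [hmax]
  have hbound := max_le_iff.1 hℓ.ge
  rw [← hℓ]
  refine Nat.cast_le.2 (hDj1.2 fun S hS => ?_)
  have hSℓ : (ℓ : ℕ∞) ≤ Multiset.card S := Nat.cast_le.2 hS
  exact hasDisjointZeroSums_succ hDj.1 (hs i).1 (by exact_mod_cast hbound.1.trans hSℓ)
    (tsub_le_iff_right.1 (hbound.2.trans hSℓ))

theorem stmt5 (G : Type*) [AddCommGroup G] [Fintype G] (j : ℕ) (hj : 0 < j)
    (Dj Dj1 : ℕ) (hDj : IsLeast (jDavenportSet G j) Dj)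
    (hDj1 : IsLeast (jDavenportSet G (j + 1)) Dj1)
    (s : ℕ → ℕ∞) (hs : ∀ i, IsLeast (shortZeroSumSet G i) (s i)) :
    ∀ i : ℕ, 0 < i → (Dj1 : ℕ∞) ≤ max ((Dj : ℕ∞) + i) (s i - 1) :=
  stmt5_general G j Dj Dj1 hDj hDj1 s hs
end

section
/- Let n ≥ k ≥ j be positive integers. In an n-dimensional vector space over the field with 2 elements, the number of k-dimensional subspaces containing a fixed j-dimensional subspace equals the 2-ary Gaussian binomial coefficient [n−j choose k−j]_2 = ∏_{i=0}^{k−j−1} (2^{n−j−i} − 1)/(2^{k−j−i} − 1). -/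
/-!
Every subspace containing `V` is the preimage of a unique subspace of the quotient by `V`, and
its dimension exceeds that subspace's by `dim V`; so we count `(k - j)`-dimensional subspaces of
the `(n - j)`-dimensional space `𝔽₂ⁿ ⧸ V`. Over a field with `q` elements, sending a linearly
independent `m`-tuple to its span is a map onto the `m`-dimensional subspaces whose fibres are
the linearly independent `m`-tuples of an `m`-dimensional space, so
`#{W | dim W = m} · ∏ᵢ (qᵐ - qⁱ) = ∏ᵢ (q^d - qⁱ)`; cancelling `qⁱ` from each quotient of factors
gives the Gaussian binomial coefficient.
-/

open Finset Module Submodule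

theorem pow_sub_pow_div_pow_sub_pow {F : Type*} [Field F] {x : F} (hx : x ≠ 0) {i m d : ℕ}
    (hid : i ≤ d) (him : i ≤ m) :
    (x ^ d - x ^ i) / (x ^ m - x ^ i) = (x ^ (d - i) - 1) / (x ^ (m - i) - 1) := by
  rw [← pow_mul_pow_sub x hid, ← pow_mul_pow_sub x him, ← mul_sub_one, ← mul_sub_one,
    mul_div_mul_left _ _ (pow_ne_zero i hx)]

theorem Nat.cast_prod_pow_sub_pow {R : Type*} [CommRing R] {q : ℕ} (hq : 0 < q) {m a : ℕ}
    (hm : m ≤ a) :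
    ((∏ i : Fin m, (q ^ a - q ^ i.val) : ℕ) : R) = ∏ i ∈ range m, ((q : R) ^ a - (q : R) ^ i) := by
  rw [Fin.prod_univ_eq_prod_range (fun i => q ^ a - q ^ i), Nat.cast_prod]
  refine prod_congr rfl fun i hi => ?_
  rw [Nat.cast_sub (Nat.pow_le_pow_right hq ((mem_range.mp hi).le.trans hm)), Nat.cast_pow,
    Nat.cast_pow]

section Counting

variable {K V : Type*} [DivisionRing K] [Fintype K] [AddCommGroup V] [Module K V] [Finite V]

def spanOfLinearIndependent (m : ℕ) :
    {f : Fin m → V // LinearIndependent K f} → {W : Submodule K V // finrank K W = m} :=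
  fun f => ⟨span K (Set.range f.1), by rw [finrank_span_eq_card f.2, Fintype.card_fin]⟩

def spanOfLinearIndependentFiberEquiv {m : ℕ} (W : {W : Submodule K V // finrank K W = m}) :
    {f // spanOfLinearIndependent m f = W} ≃ {g : Fin m → W.1 // LinearIndependent K g} where
  toFun f := ⟨fun i => ⟨f.1.1 i, by
      rw [← congrArg Subtype.val f.2]; exact subset_span (Set.mem_range_self i)⟩,
    .of_comp W.1.subtype f.1.2⟩
  invFun g := ⟨⟨W.1.subtype ∘ g.1, g.2.map' _ W.1.ker_subtype⟩, Subtype.ext <| by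
    change span K (Set.range (W.1.subtype ∘ g.1)) = W.1
    rw [Set.range_comp, span_image,
      g.2.span_eq_top_of_card_eq_finrank' (by rw [Fintype.card_fin, W.2]), Submodule.map_top,
      range_subtype]⟩
  left_inv _ := rfl
  right_inv _ := rfl

theorem card_submodule_finrank_mul_prod {m : ℕ} (hm : m ≤ finrank K V) :
    Nat.card {W : Submodule K V // finrank K W = m} *
        ∏ i : Fin m, (Fintype.card K ^ m - Fintype.card K ^ i.val) =
      ∏ i : Fin m, (Fintype.card K ^ finrank K V - Fintype.card K ^ i.val) := by
  classical
  have hfiber (W : {W : Submodule K V // finrank K W = m}) :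
      Nat.card {f // spanOfLinearIndependent m f = W} =
        ∏ i : Fin m, (Fintype.card K ^ m - Fintype.card K ^ i.val) := by
    rw [Nat.card_congr (spanOfLinearIndependentFiberEquiv W),
      card_linearIndependent (V := W.1) W.2.ge, W.2]
  have := Fintype.ofFinite {W : Submodule K V // finrank K W = m}
  rw [← card_linearIndependent hm,
    ← Nat.card_congr (Equiv.sigmaFiberEquiv (spanOfLinearIndependent m)), Nat.card_sigma,
    sum_congr rfl fun W _ => hfiber W, sum_const, smul_eq_mul, card_univ,
    Nat.card_eq_fintype_card]

theorem card_submodule_finrank_eq_prod {m : ℕ} (hm : m ≤ finrank K V) :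
    (Nat.card {W : Submodule K V // finrank K W = m} : ℚ) =
      ∏ i ∈ range m, (((Fintype.card K : ℚ) ^ (finrank K V - i) - 1) /
        ((Fintype.card K : ℚ) ^ (m - i) - 1)) := by
  have hq : 1 < (Fintype.card K : ℚ) := by exact_mod_cast Fintype.one_lt_card
  have key := congrArg (Nat.cast : ℕ → ℚ) (card_submodule_finrank_mul_prod hm)
  rw [Nat.cast_mul, Nat.cast_prod_pow_sub_pow Fintype.card_pos le_rfl,
    Nat.cast_prod_pow_sub_pow Fintype.card_pos hm] at key
  have hden : ∏ i ∈ range m, ((Fintype.card K : ℚ) ^ m - (Fintype.card K : ℚ) ^ i) ≠ 0 :=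
    prod_ne_zero_iff.mpr fun i hi =>
      sub_ne_zero.mpr (pow_lt_pow_right₀ hq (mem_range.mp hi)).ne'
  rw [eq_div_of_mul_eq hden key, ← prod_div_distrib]
  exact prod_congr rfl fun i hi => pow_sub_pow_div_pow_sub_pow (by positivity)
    ((mem_range.mp hi).le.trans hm) (mem_range.mp hi).le

end Counting

section Quotient

variable {K V : Type*} [DivisionRing K] [AddCommGroup V] [Module K V] [FiniteDimensional K V]
  (p : Submodule K V)

theorem Submodule.finrank_comap_mkQ (U : Submodule K (V ⧸ p)) :
    finrank K (U.comap p.mkQ) = finrank K U + finrank K p := by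
  have hU : (U.comap p.mkQ).map p.mkQ = U := map_comap_eq_self (by simp)
  have h := (quotientQuotientEquivQuotient p (U.comap p.mkQ) (le_comap_mkQ p U)).finrank_eq
  rw [hU] at h
  have := finrank_quotient_add_finrank p
  have := finrank_quotient_add_finrank U
  have := finrank_quotient_add_finrank (U.comap p.mkQ)
  omega

def Submodule.comapMkQFinrankEquiv (m : ℕ) :
    {U : Submodule K (V ⧸ p) // finrank K U = m} ≃
      {W : Submodule K V // finrank K W = m + finrank K p ∧ p ≤ W} :=
  ((comapMkQRelIso p).toEquiv.subtypeEquiv fun U => by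
      change _ ↔ finrank K (U.comap p.mkQ) = _
      rw [finrank_comap_mkQ, Nat.add_right_cancel_iff]).trans
    ((Equiv.subtypeSubtypeEquivSubtypeInter _ _).trans
      (Equiv.subtypeEquivRight fun _ => and_comm))

end Quotient

theorem stmt10_general (n k j : ℕ) (hjk : j ≤ k) (hkn : k ≤ n)
    (V : Submodule (ZMod 2) (Fin n → ZMod 2))
    (hV : Module.finrank (ZMod 2) V = j) :
    (Nat.card {W : Submodule (ZMod 2) (Fin n → ZMod 2) //
        Module.finrank (ZMod 2) W = k ∧ V ≤ W} : ℚ) =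
      ∏ i ∈ Finset.range (k - j),
        ((2 : ℚ) ^ (n - j - i) - 1) / ((2 : ℚ) ^ (k - j - i) - 1) := by
  have hquot : finrank (ZMod 2) ((Fin n → ZMod 2) ⧸ V) = n - j := by
    rw [finrank_quotient, finrank_fin_fun, hV]
  have hcard := Nat.card_congr (V.comapMkQFinrankEquiv (k - j))
  rw [hV, Nat.sub_add_cancel hjk] at hcard
  rw [← hcard, card_submodule_finrank_eq_prod (by omega), hquot, ZMod.card, Nat.cast_ofNat]

theorem stmt10 (n k j : ℕ) (hj : 0 < j) (hjk : j ≤ k) (hkn : k ≤ n)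
    (V : Submodule (ZMod 2) (Fin n → ZMod 2))
    (hV : Module.finrank (ZMod 2) V = j) :
    (Nat.card {W : Submodule (ZMod 2) (Fin n → ZMod 2) //
        Module.finrank (ZMod 2) W = k ∧ V ≤ W} : ℚ) =
      ∏ i ∈ Finset.range (k - j),
        ((2 : ℚ) ^ (n - j - i) - 1) / ((2 : ℚ) ^ (k - j - i) - 1) :=
  stmt10_general n k j hjk hkn V hV
end

section
/- For positive integers n ≥ r and j with n ≥ r + j, the ratio ((j+1)^n · [n−j choose n−r−j]_2) / [n choose n−r]_2 is at most 2^{n log₂(j+1) − rj}, where [· choose ·]_2 denotes the 2-ary Gaussian binomial coefficient. -/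
/-! Writing `n = r + s + j`, the ratio `[n choose s + j]₂ / [r + s choose s]₂` is the product of the
`j` factors `(2^(r+k+1) - 1) / (2^(k+1) - 1)`, `s ≤ k < s + j`, each at least `2^r`; and
`(j+1)^n = 2^(n log₂(j+1))`. -/

def gaussBinom (m t : ℕ) : ℚ :=
  ∏ i ∈ Finset.range t, ((2 : ℚ) ^ (m - i) - 1) / ((2 : ℚ) ^ (t - i) - 1)

open Finset

lemma two_pow_succ_sub_one_pos (k : ℕ) : (0 : ℚ) < 2 ^ (k + 1) - 1 :=
  sub_pos.2 (one_lt_pow₀ one_lt_two k.succ_ne_zero)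

lemma gaussBinom_add_eq_prod (r t : ℕ) :
    gaussBinom (r + t) t = ∏ k ∈ range t, ((2 : ℚ) ^ (r + k + 1) - 1) / (2 ^ (k + 1) - 1) := by
  rw [gaussBinom, ← prod_range_reflect]
  refine prod_congr rfl fun k hk => ?_
  have hk : k < t := mem_range.1 hk
  rw [show r + t - (t - 1 - k) = r + k + 1 by omega, show t - (t - 1 - k) = k + 1 by omega]

lemma gaussBinom_add_pos (r t : ℕ) : 0 < gaussBinom (r + t) t := by
  rw [gaussBinom_add_eq_prod]
  exact prod_pos fun k _ =>
    div_pos (by simpa [add_right_comm] using two_pow_succ_sub_one_pos (r + k))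
      (two_pow_succ_sub_one_pos k)

lemma two_pow_le_gaussBinom_factor (r k : ℕ) :
    (2 : ℚ) ^ r ≤ (2 ^ (r + k + 1) - 1) / (2 ^ (k + 1) - 1) := by
  rw [le_div_iff₀ (two_pow_succ_sub_one_pos k)]
  have : (1 : ℚ) ≤ 2 ^ r := one_le_pow₀ one_le_two
  calc (2 : ℚ) ^ r * (2 ^ (k + 1) - 1) = 2 ^ (r + k + 1) - 2 ^ r := by ring
    _ ≤ 2 ^ (r + k + 1) - 1 := by linarith

lemma gaussBinom_mul_two_pow_le (r s j : ℕ) :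
    gaussBinom (r + s) s * 2 ^ (r * j) ≤ gaussBinom (r + (s + j)) (s + j) := by
  rw [gaussBinom_add_eq_prod r (s + j), prod_range_add, ← gaussBinom_add_eq_prod]
  refine mul_le_mul_of_nonneg_left ?_ (gaussBinom_add_pos r s).le
  calc (2 : ℚ) ^ (r * j) = ∏ _k ∈ range j, (2 : ℚ) ^ r := by
        rw [prod_const, card_range, ← pow_mul, mul_comm]
    _ ≤ _ := prod_le_prod (fun _ _ => by positivity)
        fun k _ => by simpa [add_assoc] using two_pow_le_gaussBinom_factor r (s + k)

lemma two_rpow_mul_logb_sub {x : ℝ} (hx : 0 < x) (n m : ℕ) :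
    (2 : ℝ) ^ ((n : ℝ) * Real.logb 2 x - m) = x ^ n / 2 ^ m := by
  rw [Real.rpow_sub two_pos, mul_comm, Real.rpow_mul zero_le_two,
    Real.rpow_logb two_pos (by norm_num) hx, Real.rpow_natCast, Real.rpow_natCast]

theorem stmt13_general (n r j : ℕ) (hn : r + j ≤ n) :
    (((j : ℝ) + 1) ^ n * (gaussBinom (n - j) (n - r - j) : ℝ)) /
        (gaussBinom n (n - r) : ℝ) ≤
      (2 : ℝ) ^ ((n : ℝ) * Real.logb 2 (j + 1) - (r : ℝ) * j) := by
  obtain ⟨s, rfl⟩ : ∃ s, n = r + (s + j) := ⟨n - r - j, by omega⟩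
  rw [show r + (s + j) - r - j = s by omega, show r + (s + j) - j = r + s by omega,
    show r + (s + j) - r = s + j by omega]
  have hkey : (gaussBinom (r + s) s : ℝ) * 2 ^ (r * j) ≤ gaussBinom (r + (s + j)) (s + j) := by
    exact_mod_cast gaussBinom_mul_two_pow_le r s j
  have hpos : (0 : ℝ) < gaussBinom (r + (s + j)) (s + j) := by
    exact_mod_cast gaussBinom_add_pos r (s + j)
  rw [← Nat.cast_mul, two_rpow_mul_logb_sub (by positivity),
    div_le_div_iff₀ hpos (by positivity), mul_assoc]
  exact mul_le_mul_of_nonneg_left hkey (by positivity)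

theorem stmt13 (n r j : ℕ) (hj : 0 < j) (hr : 0 < r) (hn : r + j ≤ n) :
    (((j : ℝ) + 1) ^ n * (gaussBinom (n - j) (n - r - j) : ℝ)) /
        (gaussBinom n (n - r) : ℝ) ≤
      (2 : ℝ) ^ ((n : ℝ) * Real.logb 2 (j + 1) - (r : ℝ) * j) :=
  stmt13_general n r j hn
end

section
/- For every positive integer j ≥ 2 and every ε > 0, for all sufficiently large r one has D_j(C_2^r) ≥ (1 − ε) · (j log 2 / log(j+1)) · r. -/
open Finset Fintype Real

variable {α ι κ G : Type*}

theorem Finset.exists_subset_map_val_eq_of_le (s : ι → α) :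
    ∀ (T : Multiset α) (U : Finset ι), T ≤ U.val.map s → ∃ I ⊆ U, I.val.map s = T := by
  classical
  intro T
  induction T using Multiset.induction with
  | empty => exact fun U _ => ⟨∅, empty_subset U, rfl⟩
  | cons g T ih =>
    intro U h
    obtain ⟨x, hxU, rfl⟩ : ∃ x ∈ U, s x = g := by
      simpa using Multiset.mem_of_le h (Multiset.mem_cons_self g T)
    rw [← insert_erase hxU, insert_val_of_notMem (notMem_erase x U), Multiset.map_cons,
      Multiset.cons_le_cons_iff] at h
    obtain ⟨I, hIU, hI⟩ := ih _ h
    refine ⟨insert x I, insert_subset hxU (hIU.trans (erase_subset x U)), ?_⟩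
    rw [insert_val_of_notMem fun hx => notMem_erase x U (hIU hx), Multiset.map_cons, hI]

theorem exists_coloring_of_sum_le [DecidableEq ι] [DecidableEq κ] (s : ι → α)
    (T : κ → Multiset α) (K : Finset κ) :
    ∀ U : Finset ι, ∑ k ∈ K, T k ≤ U.val.map s →
      ∃ c : ι → Option κ, (∀ x k, c x = some k → k ∈ K) ∧
        ∀ k ∈ K, (U.filter (c · = some k)).val.map s = T k := by
  induction K using Finset.induction_on with
  | empty => exact fun U _ => ⟨fun _ => none, by simp, by simp⟩
  | insert a K haK ih =>
    intro U h
    rw [sum_insert haK] at h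
    obtain ⟨I, hIU, hI⟩ := exists_subset_map_val_eq_of_le s (T a) U (le_self_add.trans h)
    have hsplit : U.val.map s = T a + (U \ I).val.map s := by
      rw [← hI, ← Multiset.map_add, sdiff_val, add_tsub_cancel_of_le (val_le_iff.mpr hIU)]
    rw [hsplit, add_le_add_iff_left] at h
    obtain ⟨c, hcK, hc⟩ := ih (U \ I) h
    refine ⟨fun x => if x ∈ I then some a else c x, fun x k hx => ?_, fun k hk => ?_⟩
    · dsimp only at hx
      split_ifs at hx
      · simp_all
      · exact mem_insert_of_mem (hcK x k hx)
    rcases mem_insert.mp hk with rfl | hk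
    · convert hI
      ext x
      by_cases hxI : x ∈ I
      · simp [hxI, hIU hxI]
      · simpa [hxI] using fun _ hx => haK (hcK x k hx)
    · rw [← hc k hk]
      congr 2
      ext x
      have hak : a ≠ k := fun h => haK (h ▸ hk)
      by_cases hxI : x ∈ I <;> simp [hxI, hak]

section BlockSum

variable [AddCommGroup G] [Fintype ι] [DecidableEq κ]

def blockSum (c : ι → Option κ) : (ι → G) →+ (κ → G) :=
  AddMonoidHom.mk' (fun s k => ∑ x with c x = some k, s x) fun s t => by
    ext k
    simp [sum_add_distrib]

theorem blockSum_single [DecidableEq ι] {c : ι → Option κ} {x : ι} {k : κ} (hx : c x = some k)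
    (g : G) : blockSum c (Pi.single x g) = Pi.single k g := by
  ext k'
  simp [blockSum, hx, Pi.single_apply, eq_comm]

theorem blockSum_surjective [Fintype κ] {c : ι → Option κ} (hc : ∀ k, ∃ x, c x = some k) :
    Function.Surjective (blockSum (G := G) c) := by
  classical
  choose ρ hρ using hc
  intro b
  refine ⟨∑ k, Pi.single (ρ k) (b k), ?_⟩
  simp [map_sum, blockSum_single (hρ _), univ_sum_single]

theorem card_blockSum_eq_zero_mul [DecidableEq ι] [Fintype κ] [Fintype G] [DecidableEq G]
    {c : ι → Option κ} (hc : ∀ k, ∃ x, c x = some k) :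
    #{s | blockSum c s = (0 : κ → G)} * card G ^ card κ = card G ^ card ι := by
  have := (blockSum (G := G) c).ker.card_mul_index
  rw [AddSubgroup.index_ker, AddMonoidHom.range_eq_top.mpr (blockSum_surjective hc),
    AddSubgroup.card_top, Nat.card_fun, Nat.card_fun] at this
  simpa [← Fintype.card_subtype, ← Nat.card_eq_fintype_card] using this

end BlockSum

theorem exists_forall_blockSum_ne_zero [AddCommGroup G] [Fintype G] [Fintype ι] [Fintype κ]
    [DecidableEq κ] (h : (card κ + 1) ^ card ι < card G ^ card κ) :
    ∃ s : ι → G, ∀ c : ι → Option κ, (∀ k, ∃ x, c x = some k) → blockSum c s ≠ 0 := by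
  classical
  by_contra! hbad
  set adm := ({c | ∀ k, ∃ x, c x = some k} : Finset (ι → Option κ))
  have hcover : (univ : Finset (ι → G)) ⊆ adm.biUnion fun c => {s | blockSum c s = 0} := by
    intro s _
    obtain ⟨c, hc, hs⟩ := hbad s
    simpa [adm] using ⟨c, hc, hs⟩
  have hG : 0 < card G ^ card ι := by positivity
  have : card G ^ card ι * card G ^ card κ ≤ (card κ + 1) ^ card ι * card G ^ card ι :=
    calc card G ^ card ι * card G ^ card κ
        = #(univ : Finset (ι → G)) * card G ^ card κ := by simp
      _ ≤ (∑ c ∈ adm, #{s | blockSum c s = (0 : κ → G)}) * card G ^ card κ := by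
        gcongr
        exact (card_le_card hcover).trans card_biUnion_le
      _ = ∑ c ∈ adm, card G ^ card ι := by
        rw [sum_mul]
        exact sum_congr rfl fun c hc => card_blockSum_eq_zero_mul (mem_filter.mp hc).2
      _ ≤ (card κ + 1) ^ card ι * card G ^ card ι := by
        rw [sum_const, smul_eq_mul]
        gcongr
        simpa using card_le_univ adm
  nlinarith

theorem exists_multiset_card_eq_not_disjoint_zero_sums [AddCommGroup G] [Fintype G] {n j : ℕ}
    (h : (j + 1) ^ n < card G ^ j) :
    ∃ S : Multiset G, Multiset.card S = n ∧ ¬ ∃ L : List (Multiset G),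
      L.length = j ∧ L.sum ≤ S ∧ ∀ T ∈ L, T ≠ 0 ∧ T.sum = 0 := by
  obtain ⟨s, hs⟩ := exists_forall_blockSum_ne_zero (ι := Fin n) (κ := Fin j) (G := G)
    (by simpa using h)
  refine ⟨univ.val.map s, by simp, ?_⟩
  rintro ⟨L, rfl, hLS, hL⟩
  obtain ⟨c, -, hc⟩ := exists_coloring_of_sum_le s (fun k : Fin L.length => L[(k : ℕ)]) univ univ
    (by rwa [Fin.sum_univ_getElem])
  have hclass (k : Fin L.length) : ({x | c x = some k} : Finset _).val.map s = L[(k : ℕ)] :=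
    hc k (mem_univ k)
  refine hs c (fun k => ?_) (funext fun k => ?_)
  · obtain ⟨x, hx⟩ : ({x | c x = some k} : Finset _).Nonempty := by
      rw [nonempty_iff_ne_empty, Ne, ← val_eq_zero, ← Multiset.map_eq_zero (f := s), hclass]
      exact (hL _ (L.getElem_mem k.2)).1
    exact ⟨x, (mem_filter.mp hx).2⟩
  · change (({x | c x = some k} : Finset _).val.map s).sum = 0
    rw [hclass]
    exact (hL _ (L.getElem_mem k.2)).2

theorem lt_of_mem_jDavenportSet [AddCommGroup G] [Fintype G] {j n ℓ : ℕ}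
    (h : (j + 1) ^ n < card G ^ j) (hℓ : ℓ ∈ jDavenportSet G j) : n < ℓ := by
  obtain ⟨S, hS, hfree⟩ := exists_multiset_card_eq_not_disjoint_zero_sums h
  by_contra! hle
  exact hfree (hℓ S (hS ▸ hle))

theorem exists_nat_lt_le_add_one {x : ℝ} (hx : 0 < x) : ∃ n : ℕ, (n : ℝ) < x ∧ x ≤ n + 1 := by
  have hceil : 1 ≤ ⌈x⌉₊ := Nat.one_le_iff_ne_zero.mpr (Nat.ceil_pos.mpr hx).ne'
  refine ⟨⌈x⌉₊ - 1, ?_, ?_⟩ <;> push_cast [hceil]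
  · linarith [Nat.ceil_lt_add_one hx.le]
  · linarith [Nat.le_ceil x]

theorem Nat.pow_lt_pow_of_mul_log_lt {a b n m : ℕ} (ha : 0 < a) (hb : 0 < b)
    (h : n * Real.log a < m * Real.log b) : a ^ n < b ^ m := by
  have : Real.log ((a : ℝ) ^ n) < Real.log ((b : ℝ) ^ m) := by rwa [Real.log_pow, Real.log_pow]
  exact_mod_cast (Real.log_lt_log_iff (by positivity) (by positivity)).mp this

theorem stmt14 (j : ℕ) (hj : 2 ≤ j) (ε : ℝ) (hε : 0 < ε)
    (D : ℕ → ℕ) (hD : ∀ r, IsLeast (jDavenportSet (Fin r → ZMod 2) j) (D r)) :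
    ∃ R : ℕ, ∀ r : ℕ, R ≤ r →
      (1 - ε) * ((j : ℝ) * Real.log 2 / Real.log (j + 1)) * r ≤ (D r : ℝ) := by
  set c := (j : ℝ) * log 2 / log (j + 1)
  have hlog : 0 < log ((j : ℝ) + 1) := log_pos (by norm_cast; omega)
  have hc : 0 < c := div_pos (mul_pos (by norm_cast; omega) (log_pos one_lt_two)) hlog
  refine ⟨⌈(ε * c)⁻¹⌉₊ + 1, fun r hR => ?_⟩
  have hr : 0 < (r : ℝ) := by norm_cast; omega
  have hεcr : 1 ≤ ε * c * r := by
    have : (ε * c)⁻¹ ≤ r := (Nat.le_ceil _).trans (by exact_mod_cast (Nat.le_succ _).trans hR)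
    rwa [inv_le_iff_one_le_mul₀' (by positivity)] at this
  obtain ⟨n, hn, hn'⟩ := exists_nat_lt_le_add_one (mul_pos hc hr)
  have hpow : (j + 1) ^ n < card (Fin r → ZMod 2) ^ j := by
    refine Nat.pow_lt_pow_of_mul_log_lt (by omega) (by positivity) ?_
    calc (n : ℝ) * log ↑(j + 1) < c * r * log (j + 1) := by push_cast; gcongr
      _ = j * log ↑(card (Fin r → ZMod 2)) := by
        simp only [c, card_fun, ZMod.card, Fintype.card_fin]
        push_cast
        rw [log_pow]
        field_simp
  calc (1 - ε) * c * r ≤ n := by linarith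
    _ ≤ D r := by exact_mod_cast (lt_of_mem_jDavenportSet hpow (hD r).1).le
end

section
/- For every finite Abelian group G and every subgroup H of G, one has D(G) ≤ D_{D(H)}(G/H). -/
/-!
Let `S` be a sequence over `G` of length at least `D_{D(H)}(G/H)`. Its image in `G/H` contains
`D(H)` disjoint non-empty zero-sum subsequences; lifted back to `S`, these are disjoint non-empty
blocks whose sums lie in `H`. The `D(H)` block sums form a sequence over `H`, so some non-empty
subfamily of blocks has sums adding up to zero, and the union of those blocks is a non-empty
zero-sum subsequence of `S`.
-/

def hasZeroSum {G : Type*} [AddCommGroup G] (S : Multiset G) : Prop :=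
  ∃ T ≤ S, T ≠ 0 ∧ T.sum = 0

def davenportSet (G : Type*) [AddCommGroup G] : Set ℕ :=
  {ℓ | ∀ S : Multiset G, ℓ ≤ Multiset.card S → hasZeroSum S}

namespace Multiset

variable {α β : Type*}

theorem exists_le_map_eq_of_le_map {f : α → β} {S : Multiset α} {T : Multiset β}
    (h : T ≤ S.map f) : ∃ U ≤ S, U.map f = T := by
  induction S using Quotient.inductionOn
  induction T using Quotient.inductionOn
  obtain ⟨t, ht, hts⟩ := h
  obtain ⟨u, hus, rfl⟩ := List.sublist_map_iff.mp hts
  exact ⟨u, hus.subperm, Quotient.sound ht⟩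

theorem exists_map_eq_of_sum_le_map {f : α → β} (L : List (Multiset β)) {S : Multiset α}
    (h : L.sum ≤ S.map f) : ∃ L' : List (Multiset α), L'.map (map f) = L ∧ L'.sum ≤ S := by
  induction L generalizing S with
  | nil => exact ⟨[], rfl, zero_le S⟩
  | cons T L ih =>
    rw [List.sum_cons] at h
    obtain ⟨U, hUS, rfl⟩ := exists_le_map_eq_of_le_map (le_self_add.trans h)
    obtain ⟨V, rfl⟩ := exists_add_of_le hUS
    rw [map_add, add_le_add_iff_left] at h
    obtain ⟨L', rfl, hL'⟩ := ih h
    exact ⟨U :: L', rfl, add_le_add_right hL' U⟩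

theorem join_le_join {M B : Multiset (Multiset α)} (h : M ≤ B) : M.join ≤ B.join := by
  obtain ⟨K, rfl⟩ := exists_add_of_le h
  exact (join_add M K).symm ▸ le_self_add

end Multiset

section ZeroSum

variable {G : Type*} [AddCommGroup G]

theorem hasZeroSum_of_subgroup {H : AddSubgroup G} {DH : ℕ} (hDH : DH ∈ davenportSet H)
    {S : Multiset G} (hSH : ∀ x ∈ S, x ∈ H) (hS : DH ≤ Multiset.card S) : hasZeroSum S := by
  lift S to Multiset H using hSH
  rw [Multiset.card_map] at hS
  obtain ⟨T, hTS, hT0, hTsum⟩ := hDH S hS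
  refine ⟨T.map (↑), Multiset.map_le_map hTS, by simpa using hT0, ?_⟩
  rw [← AddSubgroup.val_multiset_sum, hTsum, ZeroMemClass.coe_zero]

theorem hasZeroSum_of_blocks {H : AddSubgroup G} {DH : ℕ} (hDH : DH ∈ davenportSet H)
    {S : Multiset G} (B : Multiset (Multiset G)) (hBS : B.join ≤ S)
    (hB : ∀ U ∈ B, U ≠ 0 ∧ U.sum ∈ H) (hcard : DH ≤ Multiset.card B) : hasZeroSum S := by
  have hsums : ∀ x ∈ B.map Multiset.sum, x ∈ H := by
    simpa only [Multiset.mem_map, forall_exists_index, and_imp, forall_apply_eq_imp_iff₂]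
      using fun U hU => (hB U hU).2
  obtain ⟨T, hTB, hT0, hTsum⟩ :=
    hasZeroSum_of_subgroup hDH hsums (by rwa [Multiset.card_map])
  obtain ⟨M, hMB, rfl⟩ := Multiset.exists_le_map_eq_of_le_map hTB
  obtain ⟨U, hUM⟩ := Multiset.exists_mem_of_ne_zero (by simpa using hT0 : M ≠ 0)
  have hUjoin : U ≤ M.join := Multiset.le_sum_of_mem hUM
  refine ⟨M.join, (Multiset.join_le_join hMB).trans hBS, ?_, by rwa [Multiset.sum_join]⟩
  exact fun h => (hB U (Multiset.mem_of_le hMB hUM)).1 (Multiset.le_zero.mp (h ▸ hUjoin))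

theorem mem_davenportSet_of_mem_jDavenportSet_quotient {H : AddSubgroup G} {DH DQ : ℕ}
    (hDH : DH ∈ davenportSet H) (hDQ : DQ ∈ jDavenportSet (G ⧸ H) DH) :
    DQ ∈ davenportSet G := by
  intro S hS
  obtain ⟨L, hLlen, hLS, hL⟩ :=
    hDQ (S.map (QuotientAddGroup.mk' H)) (by rwa [Multiset.card_map])
  obtain ⟨L', rfl, hL'S⟩ := Multiset.exists_map_eq_of_sum_le_map L hLS
  refine hasZeroSum_of_blocks hDH (L' : Multiset (Multiset G))
    (by rwa [Multiset.join, Multiset.sum_coe]) ?_ (by simpa using hLlen.ge)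
  intro U hU
  obtain ⟨hU0, hUsum⟩ := hL _ (List.mem_map_of_mem (Multiset.mem_coe.mp hU))
  rw [← map_multiset_sum, QuotientAddGroup.mk'_apply, QuotientAddGroup.eq_zero_iff] at hUsum
  exact ⟨by simpa using hU0, hUsum⟩

end ZeroSum

theorem stmt18_general (G : Type*) [AddCommGroup G] (H : AddSubgroup G)
    (DG DH DQ : ℕ)
    (hDG : IsLeast (davenportSet G) DG)
    (hDH : IsLeast (davenportSet H) DH)
    (hDQ : IsLeast (jDavenportSet (G ⧸ H) DH) DQ) :
    DG ≤ DQ :=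
  hDG.2 (mem_davenportSet_of_mem_jDavenportSet_quotient hDH.1 hDQ.1)

theorem stmt18 (G : Type*) [AddCommGroup G] [Fintype G] (H : AddSubgroup G)
    (DG DH DQ : ℕ)
    (hDG : IsLeast (davenportSet G) DG)
    (hDH : IsLeast (davenportSet H) DH)
    (hDQ : IsLeast (jDavenportSet (G ⧸ H) DH) DQ) :
    DG ≤ DQ :=
  stmt18_general G H DG DH DQ hDG hDH hDQ
end
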